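/- (Proposition 10.) Assume α ≠ 0, β ≠ 0, l ≠ 0, m ≠ 0, α ≠ 4, β ≠ 4, γ ≠ 4. Define the half-turns h₁, h₂, h₃ : M → M as the linear maps with h₁(a₂) = −a₂, h₁(a₃) = −a₃, h₁(a₁) = −a₁ + (2/(4−γ))·b₁; h₂(a₁) = −a₁, h₂(a₃) = −a₃, h₂(a₂) = −a₂ + (2/(4−β))·b₂; h₃(a₁) = −a₁, h₃(a₂) = −a₂, h₃(a₃) = −a₃ + (2/(4−α))·b₃. Then h₂ ∘ h₃ ∘ h₁ = h₁ ∘ h₃ ∘ h₂ if and only if Δ = 0. -/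

import Mathlib

noncomputable section

variable {K : Type*} [Field K] [CharZero K]

/-- The linear functional `x ↦ c 0 * x 0 + c 1 * x 1 + c 2 * x 2` on `K³`. -/
def lf (c : Fin 3 → K) : (Fin 3 → K) →ₗ[K] K :=
  c 0 • LinearMap.proj 0 + c 1 • LinearMap.proj 1 + c 2 • LinearMap.proj 2

/-- `s₁ : x ↦ x − (2x₁ − α x₂ − β x₃)·a₁` where `a₁ = Pi.single 0 1`. -/
def s1 (α β : K) : Module.End K (Fin 3 → K) :=
  LinearMap.id - (lf ![2, -α, -β]).smulRight (Pi.single 0 1)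

/-- `s₂ : x ↦ x − (−x₁ + 2x₂ − l·x₃)·a₂`. -/
def s2 (l : K) : Module.End K (Fin 3 → K) :=
  LinearMap.id - (lf ![-1, 2, -l]).smulRight (Pi.single 1 1)

/-- `s₃ : x ↦ x − (−x₁ − m·x₂ + 2x₃)·a₃`. -/
def s3 (m : K) : Module.End K (Fin 3 → K) :=
  LinearMap.id - (lf ![-1, -m, 2]).smulRight (Pi.single 2 1)

/-- `b = b₁ = (4−γ)a₁ + (l+2)a₂ + (m+2)a₃`, with `γ = l·m`. -/
def bvec (l m : K) : Fin 3 → K := ![4 - l * m, l + 2, m + 2]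

/-- `b₂ = (2α+βm)a₁ + (4−β)a₂ + (α+2m)a₃`. -/
def b2vec (α β l m : K) : Fin 3 → K := ![2*α + β*m, 4 - β, α + 2*m]

/-- `b₃ = (2β+αl)a₁ + (β+2l)a₂ + (4−α)a₃`. -/
def b3vec (α β l m : K) : Fin 3 → K := ![2*β + α*l, β + 2*l, 4 - α]

/-- `τ(λ,μ) : a₁ ↦ a₁ + ω·b, a₂ ↦ a₂ + λ·b, a₃ ↦ a₃ + μ·b`,
where `ω = −(λ(l+2) + μ(m+2))/(4−γ)`. -/
def tau (l m lam mu : K) : Module.End K (Fin 3 → K) :=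
  LinearMap.id +
    (lf ![-(lam*(l+2) + mu*(m+2))/(4 - l*m), lam, mu]).smulRight (bvec l m)

/-- `τ` applied to a vector `(λ,μ) ∈ K²`. -/
def tauv (l m : K) (v : K × K) : Module.End K (Fin 3 → K) := tau l m v.1 v.2

def c1 (α β : K) : K × K := (α, β)
def c2 (l : K) : K × K := (-2, l)
def c3 (m : K) : K × K := (m, -2)

/-- `z₁ : a₁ ↦ −a₁ + (2/(4−γ))·b, a₂ ↦ −a₂, a₃ ↦ −a₃`. -/
def z1 (l m : K) : Module.End K (Fin 3 → K) :=
  -LinearMap.id + (lf ![2/(4 - l*m), 0, 0]).smulRight (bvec l m)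

/-- `z₂ : a₂ ↦ −a₂ + (2/(l+2))·b, a₁ ↦ −a₁, a₃ ↦ −a₃`. -/
def z2 (l m : K) : Module.End K (Fin 3 → K) :=
  -LinearMap.id + (lf ![0, 2/(l+2), 0]).smulRight (bvec l m)

/-- `z₃ : a₃ ↦ −a₃ + (2/(m+2))·b, a₁ ↦ −a₁, a₂ ↦ −a₂`. -/
def z3 (l m : K) : Module.End K (Fin 3 → K) :=
  -LinearMap.id + (lf ![0, 0, 2/(m+2)]).smulRight (bvec l m)

/-- The linear functional `(λ,μ) ↦ c.1·λ + c.2·μ` on `K²`. -/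
def lf2 (c : K × K) : (K × K) →ₗ[K] K := c.1 • LinearMap.fst K K K + c.2 • LinearMap.snd K K K

/-- `σ₁(λ,μ) = (λ,μ) − ((λ(l+2)+μ(m+2))/(4−γ))·(α,β)`. -/
def sigma1 (α β l m : K) : Module.End K (K × K) :=
  LinearMap.id - (lf2 ((l+2)/(4 - l*m), (m+2)/(4 - l*m))).smulRight (α, β)

/-- `σ₂(λ,μ) = (λ,μ) + λ·(−2,l)`. -/
def sigma2 (l : K) : Module.End K (K × K) :=
  LinearMap.id + (LinearMap.fst K K K).smulRight ((-2 : K), l)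

/-- `σ₃(λ,μ) = (λ,μ) + μ·(m,−2)`. -/
def sigma3 (m : K) : Module.End K (K × K) :=
  LinearMap.id + (LinearMap.snd K K K).smulRight (m, (-2 : K))

/-- The sequence `u_x` : `u_x(0)=0, u_x(1)=u_x(2)=1, u_x(3)=x−1,
u_x(n+4) = (x−2)·u_x(n+2) − u_x(n)`. -/
def useq (x : K) : ℕ → K
  | 0 => 0
  | 1 => 1
  | 2 => 1
  | 3 => x - 1
  | (n+4) => (x - 2) * useq x (n+2) - useq x n


/-- The half-turn `h₁ : a₁ ↦ −a₁ + (2/(4−γ))b₁, a₂ ↦ −a₂, a₃ ↦ −a₃`. -/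
def h1 (l m : K) : Module.End K (Fin 3 → K) :=
  -LinearMap.id + (lf ![2/(4 - l*m), 0, 0]).smulRight (bvec l m)

/-- The half-turn `h₂ : a₂ ↦ −a₂ + (2/(4−β))b₂, a₁ ↦ −a₁, a₃ ↦ −a₃`. -/
def h2 (α β l m : K) : Module.End K (Fin 3 → K) :=
  -LinearMap.id + (lf ![0, 2/(4-β), 0]).smulRight (b2vec α β l m)

/-- The half-turn `h₃ : a₃ ↦ −a₃ + (2/(4−α))b₃, a₁ ↦ −a₁, a₂ ↦ −a₂`. -/
def h3 (α β l m : K) : Module.End K (Fin 3 → K) :=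
  -LinearMap.id + (lf ![0, 0, 2/(4-α)]).smulRight (b3vec α β l m)

/-! Each `hᵢ` is `x ↦ -x + (2 xᵢ / dᵢ) bᵢ` with `d₁ = 4 - γ`, `d₂ = 4 - β`, `d₃ = 4 - α`. Expanding the
two triple products, `(h₂h₃h₁ - h₁h₃h₂) x = Σⱼ (2 xⱼ / dⱼ) vⱼ` with each `vⱼ` a combination of the `bᵢ`,
and every `vⱼ` turns out to be a multiple of `Δ`; the cofactors form the matrix `halfTurnDefect`. Its
`(2, 1)` entry `β - 4` does not vanish, so the two products agree exactly when `Δ = 0`. -/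

def halfTurnDefect (α β l m : K) : Matrix (Fin 3) (Fin 3) K :=
  !![-2 * (α + β + β * m), α * (4 - l * m), β * (4 - l * m);
     -(4 - β), 2 * (α * l + α + l * m), -l * (4 - β);
     -(α + 4 * m + 4), α * m + 4 * α + 4 * m, 2 * (β - l * m)]

omit [CharZero K] in
theorem lf_apply (c x : Fin 3 → K) : lf c x = c 0 * x 0 + c 1 * x 1 + c 2 * x 2 := rfl

omit [CharZero K] in
theorem h2_mul_h3_mul_h1_sub_h1_mul_h3_mul_h2 (α β l m : K)
    (hα4 : α ≠ 4) (hβ4 : β ≠ 4) (hγ : l * m ≠ 4) :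
    h2 α β l m * h3 α β l m * h1 l m - h1 l m * h3 α β l m * h2 α β l m =
      (4 * (8 - 2*α - 2*β - 2*(l*m) - (α*l + β*m)) / ((4 - l * m) * (4 - β) * (4 - α))) •
        Matrix.toLin' (halfTurnDefect α β l m) := by
  have hA : (4:K) - α ≠ 0 := sub_ne_zero.mpr hα4.symm
  have hB : (4:K) - β ≠ 0 := sub_ne_zero.mpr hβ4.symm
  have hG : (4:K) - l * m ≠ 0 := sub_ne_zero.mpr hγ.symm
  refine LinearMap.ext fun x => funext fun i => ?_
  simp only [h1, h2, h3, LinearMap.sub_apply, Module.End.mul_apply, LinearMap.smul_apply,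
    LinearMap.add_apply, LinearMap.neg_apply, LinearMap.id_apply, LinearMap.smulRight_apply,
    lf_apply, Matrix.toLin'_apply]
  fin_cases i <;>
    simp only [Fin.zero_eta, Fin.mk_one, Fin.reduceFinMk, Fin.isValue, bvec, b2vec, b3vec,
      halfTurnDefect, Pi.add_apply, Pi.neg_apply, Pi.sub_apply, Pi.smul_apply, smul_eq_mul,
      Matrix.cons_val_zero, Matrix.cons_val_one, Matrix.cons_val, Matrix.cons_mulVec,
      Matrix.empty_mulVec, dotProduct, Fin.sum_univ_three] <;>
    field_simp <;>
    ring

omit [CharZero K] in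
theorem halfTurnDefect_ne_zero (α β l m : K) (hβ4 : β ≠ 4) : halfTurnDefect α β l m ≠ 0 :=
  fun h => hβ4 <| by simpa [halfTurnDefect, sub_eq_zero] using congrFun (congrFun h 1) 0

theorem stmt17_general (α β l m : K)
    (hα4 : α ≠ 4) (hβ4 : β ≠ 4) (hγ : l*m ≠ 4) :
    h2 α β l m * h3 α β l m * h1 l m = h1 l m * h3 α β l m * h2 α β l m ↔
      8 - 2*α - 2*β - 2*(l*m) - (α*l + β*m) = 0 := by
  rw [← sub_eq_zero, h2_mul_h3_mul_h1_sub_h1_mul_h3_mul_h2 α β l m hα4 hβ4 hγ, smul_eq_zero,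
    LinearEquiv.map_eq_zero_iff, or_iff_left (halfTurnDefect_ne_zero α β l m hβ4)]
  simp [sub_eq_zero, hα4.symm, hβ4.symm, hγ.symm]

/-- Proposition 10: with `α,β,l,m ≠ 0`, `α ≠ 4`, `β ≠ 4`, `γ ≠ 4`:
`h₂ ∘ h₃ ∘ h₁ = h₁ ∘ h₃ ∘ h₂` iff `Δ = 0`. -/
theorem stmt17 (α β l m : K) (hα0 : α ≠ 0) (hβ0 : β ≠ 0) (hl : l ≠ 0) (hm : m ≠ 0)
    (hα4 : α ≠ 4) (hβ4 : β ≠ 4) (hγ : l*m ≠ 4) :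
    h2 α β l m * h3 α β l m * h1 l m = h1 l m * h3 α β l m * h2 α β l m ↔
      8 - 2*α - 2*β - 2*(l*m) - (α*l + β*m) = 0 :=
  stmt17_general α β l m hα4 hβ4 hγ

end
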